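/- Let G be a finite simple graph of order n ≥ 3 with no isolated vertex such that γ_oitR(G) > γ_oiR(G). Then max{γ_{t,oi}(G), γ_oiR(G)} + 1 ≤ γ_oitR(G) ≤ min{γ_{t,oi}(G), γ_oiR(G)} + γ(G). -/

import Mathlib

namespace OITRPaper

variable {V : Type*}

/-- `S` is a vertex cover of `G`: every edge of `G` is incident to a vertex of `S`. -/
def IsVertexCover (G : SimpleGraph V) (S : Set V) : Prop :=
  ∀ ⦃u v : V⦄, G.Adj u v → u ∈ S ∨ v ∈ S

/-- `S` is an independent set of `G`: no two vertices of `S` are adjacent. -/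
def IsIndepSet (G : SimpleGraph V) (S : Set V) : Prop :=
  ∀ ⦃u : V⦄, u ∈ S → ∀ ⦃v : V⦄, v ∈ S → ¬ G.Adj u v

/-- `S` is a dominating set of `G`. -/
def IsDomSet (G : SimpleGraph V) (S : Set V) : Prop :=
  ∀ v : V, v ∉ S → ∃ u ∈ S, G.Adj v u

/-- `S` is a total dominating set of `G`: every vertex has a neighbor in `S`. -/
def IsTotalDomSet (G : SimpleGraph V) (S : Set V) : Prop :=
  ∀ v : V, ∃ u ∈ S, G.Adj v u

/-- `G` is claw-free: it contains no induced `K_{1,3}`. -/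
def ClawFree (G : SimpleGraph V) : Prop :=
  ∀ c a b d : V, G.Adj c a → G.Adj c b → G.Adj c d →
    a ≠ b → a ≠ d → b ≠ d → G.Adj a b ∨ G.Adj a d ∨ G.Adj b d

/-- `f` is a Roman dominating function on `G`. -/
def IsRDF (G : SimpleGraph V) (f : V → ℕ) : Prop :=
  (∀ v, f v ≤ 2) ∧ ∀ v, f v = 0 → ∃ u, G.Adj v u ∧ f u = 2

/-- `f` is an outer-independent Roman dominating function on `G`. -/
def IsOIRDF (G : SimpleGraph V) (f : V → ℕ) : Prop :=
  IsRDF G f ∧ IsIndepSet G {v | f v = 0}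

/-- `f` is an outer-independent total Roman dominating function on `G`. -/
def IsOITRDF (G : SimpleGraph V) (f : V → ℕ) : Prop :=
  IsOIRDF G f ∧ ∀ v, 1 ≤ f v → ∃ u, G.Adj v u ∧ 1 ≤ f u

variable [Fintype V]

/-- The vertex cover number `α(G)`. -/
noncomputable def vertexCoverNum (G : SimpleGraph V) : ℕ :=
  sInf {m | ∃ S : Set V, IsVertexCover G S ∧ S.ncard = m}

/-- The independence number `β(G)`. -/
noncomputable def indepNum (G : SimpleGraph V) : ℕ :=
  sSup {m | ∃ S : Set V, IsIndepSet G S ∧ S.ncard = m}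

/-- The domination number `γ(G)`. -/
noncomputable def domNum (G : SimpleGraph V) : ℕ :=
  sInf {m | ∃ S : Set V, IsDomSet G S ∧ S.ncard = m}

/-- The total domination number `γ_t(G)`. -/
noncomputable def totalDomNum (G : SimpleGraph V) : ℕ :=
  sInf {m | ∃ S : Set V, IsTotalDomSet G S ∧ S.ncard = m}

/-- The outer-independent total domination number `γ_{t,oi}(G)`. -/
noncomputable def oiTotalDomNum (G : SimpleGraph V) : ℕ :=
  sInf {m | ∃ S : Set V, IsTotalDomSet G S ∧ IsIndepSet G Sᶜ ∧ S.ncard = m}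

/-- The Roman domination number `γ_R(G)`. -/
noncomputable def romanDomNum (G : SimpleGraph V) : ℕ :=
  sInf {w | ∃ f : V → ℕ, IsRDF G f ∧ ∑ v, f v = w}

/-- The outer-independent Roman domination number `γ_{oiR}(G)`. -/
noncomputable def oiRomanDomNum (G : SimpleGraph V) : ℕ :=
  sInf {w | ∃ f : V → ℕ, IsOIRDF G f ∧ ∑ v, f v = w}

/-- The outer-independent total Roman domination number `γ_{oitR}(G)`. -/
noncomputable def oitRomanDomNum (G : SimpleGraph V) : ℕ :=
  sInf {w | ∃ f : V → ℕ, IsOITRDF G f ∧ ∑ v, f v = w}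

end OITRPaper

/-!
For the upper bounds, add a minimum dominating set `D` to a known function. With a minimum
outer-independent total dominating set `S`, take `1_S + 1_D`: a vertex outside `S ∪ D` has a
neighbour in `D`, which lies in `S` because `Sᶜ` is independent. With a minimum OIRDF `g`, raise
the vertices of `D` to at least `1`; a vertex of `D` that still lacks a positive neighbour has
`g ≥ 1`, so raising one of its neighbours instead costs nothing extra.

For the lower bound, the positive vertices of a minimum OITRDF `f` form an outer-independent
total dominating set of size `γ_oitR(G) - #{v | f v = 2}`. If `f` never takes the value `2`, then
`f ≡ 1` and `γ_oitR(G) = n`; either `V` minus one vertex is still an outer-independent total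
dominating set, or every vertex has a neighbour of degree one, which makes `G` a perfect matching
and forces `γ_oiR(G) = n`.
-/

namespace OITRPaper

variable {V : Type*} {G : SimpleGraph V} {f g : V → ℕ}

theorem isOIRDF_one : IsOIRDF G fun _ => 1 :=
  ⟨⟨fun _ => one_le_two, by simp⟩, by simp [IsIndepSet]⟩

theorem IsOIRDF.mono (hg : IsOIRDF G g) (hgf : ∀ v, g v ≤ f v) (hf : ∀ v, f v ≤ 2) :
    IsOIRDF G f := by
  obtain ⟨⟨-, hg0⟩, hgind⟩ := hg
  have hzero : ∀ v, f v = 0 → g v = 0 := fun v hv => Nat.eq_zero_of_le_zero (hv ▸ hgf v)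
  refine ⟨⟨hf, fun v hv => ?_⟩, fun u hu w hw => hgind (hzero u hu) (hzero w hw)⟩
  obtain ⟨u, hvu, hu⟩ := hg0 v (hzero v hv)
  exact ⟨u, hvu, le_antisymm (hf u) (hu ▸ hgf u)⟩

theorem IsOIRDF.isOITRDF (hf : IsOIRDF G f) (htot : IsTotalDomSet G {v | 1 ≤ f v}) :
    IsOITRDF G f :=
  ⟨hf, fun v _ => let ⟨u, hu, hvu⟩ := htot v; ⟨u, hvu, hu⟩⟩

theorem IsOITRDF.isTotalDomSet (hf : IsOITRDF G f) : IsTotalDomSet G {v | 1 ≤ f v} := by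
  intro v
  rcases Nat.eq_zero_or_pos (f v) with hv | hv
  · obtain ⟨u, hvu, hu⟩ := hf.1.1.2 v hv
    exact ⟨u, by simp [hu], hvu⟩
  · obtain ⟨u, hvu, hu⟩ := hf.2 v hv
    exact ⟨u, hu, hvu⟩

theorem IsOIRDF.isIndepSet_compl (hf : IsOIRDF G f) : IsIndepSet G {v | 1 ≤ f v}ᶜ := by
  intro u hu w hw
  simp only [Set.mem_compl_iff, Set.mem_ofPred_eq, not_le, Nat.lt_one_iff] at hu hw
  exact hf.2 hu hw

theorem IsRDF.exists_eq_two_of_ne_one (hf : IsRDF G f) {v : V} (hv : f v ≠ 1) :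
    ∃ u, f u = 2 := by
  rcases Nat.eq_zero_or_pos (f v) with h0 | hpos
  · obtain ⟨u, -, hu⟩ := hf.2 v h0
    exact ⟨u, hu⟩
  · exact ⟨v, by have := hf.1 v; omega⟩

theorem exists_isDomSet_ncard_eq_domNum (G : SimpleGraph V) :
    ∃ D, IsDomSet G D ∧ D.ncard = domNum G :=
  Nat.sInf_mem (s := {m | ∃ D, IsDomSet G D ∧ D.ncard = m})
    ⟨_, Set.univ, fun v hv => (hv (Set.mem_univ v)).elim, rfl⟩

theorem exists_isTotalDomSet_isIndepSet_compl_ncard_eq_oiTotalDomNum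
    (hiso : ∀ v, ∃ u, G.Adj v u) :
    ∃ S, IsTotalDomSet G S ∧ IsIndepSet G Sᶜ ∧ S.ncard = oiTotalDomNum G := by
  refine Nat.sInf_mem (s := {m | ∃ S, IsTotalDomSet G S ∧ IsIndepSet G Sᶜ ∧ S.ncard = m})
    ⟨_, Set.univ, fun v => ?_, by simp [IsIndepSet], rfl⟩
  obtain ⟨u, hvu⟩ := hiso v
  exact ⟨u, Set.mem_univ u, hvu⟩

theorem ncard_union_image_inter_le [Finite V] {D Z B : Set V} (c : V → V) (hB : B ⊆ D \ Z) :
    ((D ∪ c '' B) ∩ Z).ncard ≤ D.ncard :=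
  calc ((D ∪ c '' B) ∩ Z).ncard ≤ ((D ∩ Z) ∪ c '' B).ncard :=
        Set.ncard_le_ncard fun v hv => hv.1.imp (fun hvD => ⟨hvD, hv.2⟩) id
    _ ≤ (D ∩ Z).ncard + B.ncard :=
        (Set.ncard_union_le _ _).trans (Nat.add_le_add_left Set.ncard_image_le _)
    _ ≤ (D ∩ Z).ncard + (D \ Z).ncard := Nat.add_le_add_left (Set.ncard_le_ncard hB) _
    _ = D.ncard := Set.ncard_inter_add_ncard_sdiff_eq_ncard D Z

variable [Fintype V]

theorem ncard_eq_sum_ite (S : Set V) [DecidablePred (· ∈ S)] :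
    S.ncard = ∑ v, if v ∈ S then 1 else 0 := by
  rw [Set.ncard_eq_toFinset_card', Finset.sum_boole]
  congr 1
  ext v
  simp

theorem IsRDF.sum_eq (hf : IsRDF G f) :
    ∑ v, f v = {v | 1 ≤ f v}.ncard + {v | f v = 2}.ncard := by
  classical
  rw [ncard_eq_sum_ite, ncard_eq_sum_ite, ← Finset.sum_add_distrib]
  refine Finset.sum_congr rfl fun v _ => ?_
  have := hf.1 v
  simp only [Set.mem_ofPred_eq]
  split_ifs <;> omega

theorem sum_max_ite_le (g : V → ℕ) (T : Set V) [DecidablePred (· ∈ T)] :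
    ∑ v, max (g v) (if v ∈ T then 1 else 0) ≤ ∑ v, g v + (T ∩ {v | g v = 0}).ncard := by
  classical
  rw [ncard_eq_sum_ite, ← Finset.sum_add_distrib]
  refine Finset.sum_le_sum fun v _ => ?_
  by_cases hT : v ∈ T <;> by_cases hg : g v = 0 <;> simp [hT, hg, Nat.one_le_iff_ne_zero]

theorem exists_isOIRDF_sum_eq_oiRomanDomNum (G : SimpleGraph V) :
    ∃ f, IsOIRDF G f ∧ ∑ v, f v = oiRomanDomNum G :=
  Nat.sInf_mem (s := {w | ∃ f, IsOIRDF G f ∧ ∑ v, f v = w}) ⟨_, _, isOIRDF_one, rfl⟩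

theorem exists_isOITRDF_sum_eq_oitRomanDomNum (hiso : ∀ v, ∃ u, G.Adj v u) :
    ∃ f, IsOITRDF G f ∧ ∑ v, f v = oitRomanDomNum G :=
  Nat.sInf_mem (s := {w | ∃ f, IsOITRDF G f ∧ ∑ v, f v = w})
    ⟨_, _, isOIRDF_one.isOITRDF fun v => (hiso v).imp fun _ hvu => ⟨Nat.le_refl 1, hvu⟩, rfl⟩

theorem oitRomanDomNum_le_oiTotalDomNum_add_domNum (hiso : ∀ v, ∃ u, G.Adj v u) :
    oitRomanDomNum G ≤ oiTotalDomNum G + domNum G := by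
  classical
  obtain ⟨S, hStot, hSind, hS⟩ := exists_isTotalDomSet_isIndepSet_compl_ncard_eq_oiTotalDomNum hiso
  obtain ⟨D, hDdom, hD⟩ := exists_isDomSet_ncard_eq_domNum G
  let f : V → ℕ := fun v => (if v ∈ S then 1 else 0) + (if v ∈ D then 1 else 0)
  have hzero : ∀ v, f v = 0 → v ∉ S ∧ v ∉ D := fun v hv => by
    simp only [f] at hv
    constructor <;> intro h <;> simp [h] at hv
  have hf : IsOITRDF G f := by
    refine IsOIRDF.isOITRDF ⟨⟨fun v => ?_, fun v hv => ?_⟩, fun u hu w hw => ?_⟩ fun v => ?_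
    · simp only [f]
      split_ifs <;> simp
    · obtain ⟨hvS, hvD⟩ := hzero v hv
      obtain ⟨d, hdD, hvd⟩ := hDdom v hvD
      have hdS : d ∈ S := by_contra fun hdS => hSind hvS hdS hvd
      exact ⟨d, hvd, by simp [f, hdS, hdD]⟩
    · exact hSind (hzero u hu).1 (hzero w hw).1
    · obtain ⟨u, huS, hvu⟩ := hStot v
      exact ⟨u, by simp [f, huS], hvu⟩
  calc oitRomanDomNum G ≤ ∑ v, f v := Nat.sInf_le ⟨f, hf, rfl⟩
    _ = S.ncard + D.ncard := by rw [ncard_eq_sum_ite, ncard_eq_sum_ite, ← Finset.sum_add_distrib]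
    _ = oiTotalDomNum G + domNum G := by rw [hS, hD]

theorem oitRomanDomNum_le_oiRomanDomNum_add_domNum (hiso : ∀ v, ∃ u, G.Adj v u) :
    oitRomanDomNum G ≤ oiRomanDomNum G + domNum G := by
  classical
  obtain ⟨g, hg, hgsum⟩ := exists_isOIRDF_sum_eq_oiRomanDomNum G
  obtain ⟨D, hDdom, hD⟩ := exists_isDomSet_ncard_eq_domNum G
  choose c hc using hiso
  let Z : Set V := {v | g v = 0}
  let Bad : Set V := {v | v ∈ D ∧ v ∉ Z ∧ ∀ u, G.Adj v u → u ∈ Z ∧ u ∉ D}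
  let T : Set V := D ∪ c '' Bad
  let f : V → ℕ := fun v => max (g v) (if v ∈ T then 1 else 0)
  have hpos : ∀ v ∈ T, 1 ≤ f v := fun v hv => le_max_of_le_right (by simp [hv])
  have hf2 : ∀ v, f v ≤ 2 := fun v => max_le (hg.1.1 v) (by split_ifs <;> omega)
  have htot : IsTotalDomSet G {v | 1 ≤ f v} := by
    intro v
    by_contra! hnone
    have hnbr : ∀ u, G.Adj v u → u ∈ Z ∧ u ∉ T := fun u hvu => by
      have hu : f u = 0 := by_contra fun h => hnone u (Nat.one_le_iff_ne_zero.2 h) hvu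
      exact ⟨Nat.eq_zero_of_le_zero (hu ▸ le_max_left _ _), fun huT => by
        have := hpos u huT; omega⟩
    by_cases hvZ : v ∈ Z
    · obtain ⟨u, hvu, hu⟩ := hg.1.2 v hvZ
      have hu0 : g u = 0 := (hnbr u hvu).1
      omega
    by_cases hvD : v ∈ D
    · have hvBad : v ∈ Bad :=
        ⟨hvD, hvZ, fun u hvu => ⟨(hnbr u hvu).1, fun huD => (hnbr u hvu).2 (Or.inl huD)⟩⟩
      exact (hnbr (c v) (hc v)).2 (Or.inr ⟨v, hvBad, rfl⟩)
    · obtain ⟨d, hdD, hvd⟩ := hDdom v hvD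
      exact (hnbr d hvd).2 (Or.inl hdD)
  have hf : IsOITRDF G f := (hg.mono (fun v => le_max_left _ _) hf2).isOITRDF htot
  calc oitRomanDomNum G ≤ ∑ v, f v := Nat.sInf_le ⟨f, hf, rfl⟩
    _ ≤ ∑ v, g v + (T ∩ Z).ncard := sum_max_ite_le g T
    _ ≤ ∑ v, g v + D.ncard :=
      Nat.add_le_add_left (ncard_union_image_inter_le c fun v hv => ⟨hv.1, hv.2.1⟩) _
    _ = oiRomanDomNum G + domNum G := by rw [hgsum, hD]

theorem card_le_oiRomanDomNum_of_adj_iff (m : V → V) (hm : ∀ v u, G.Adj v u ↔ u = m v) :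
    Fintype.card V ≤ oiRomanDomNum G := by
  obtain ⟨g, ⟨⟨-, hg0⟩, -⟩, hgsum⟩ := exists_isOIRDF_sum_eq_oiRomanDomNum G
  have hinv : Function.Involutive m := fun v =>
    ((hm (m v) v).1 ((hm v (m v)).2 rfl).symm).symm
  have hpair : ∀ v, 2 ≤ g v + g (m v) := fun v => by
    rcases Nat.eq_zero_or_pos (g v) with hv | hv
    · obtain ⟨u, hvu, hu⟩ := hg0 v hv
      rw [(hm v u).1 hvu] at hu
      omega
    rcases Nat.eq_zero_or_pos (g (m v)) with hmv | hmv
    · obtain ⟨u, hvu, hu⟩ := hg0 (m v) hmv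
      rw [(hm _ u).1 hvu, hinv v] at hu
      omega
    omega
  have hsum : 2 * Fintype.card V ≤ 2 * ∑ v, g v :=
    calc 2 * Fintype.card V = ∑ _v : V, 2 := by simp [mul_comm]
      _ ≤ ∑ v, (g v + g (m v)) := Finset.sum_le_sum fun v _ => hpair v
      _ = 2 * ∑ v, g v := by
        rw [Finset.sum_add_distrib,
          Fintype.sum_bijective m hinv.bijective (fun v => g (m v)) g fun _ => rfl]
        ring
  omega

theorem oiTotalDomNum_lt_card_or_exists_adj_iff (hiso : ∀ v, ∃ u, G.Adj v u) :
    oiTotalDomNum G < Fintype.card V ∨ ∃ m : V → V, ∀ v u, G.Adj v u ↔ u = m v := by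
  by_cases h : ∃ x, ∀ p, G.Adj x p → ∃ q, G.Adj p q ∧ q ≠ x
  · obtain ⟨x, hx⟩ := h
    left
    have htot : IsTotalDomSet G {x}ᶜ := fun v => by
      obtain ⟨u, hvu⟩ := hiso v
      by_cases hux : u = x
      · obtain ⟨q, hvq, hqx⟩ := hx v (hux ▸ hvu.symm)
        exact ⟨q, hqx, hvq⟩
      · exact ⟨u, hux, hvu⟩
    have hind : IsIndepSet G ({x}ᶜ : Set V)ᶜ := fun u hu w hw => by
      simp only [compl_compl, Set.mem_singleton_iff] at hu hw
      subst hu hw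
      exact G.irrefl
    have hcard : ({x}ᶜ : Set V).ncard + 1 = Fintype.card V := by
      rw [← Set.ncard_singleton x, add_comm, Set.ncard_add_ncard_compl, Nat.card_eq_fintype_card]
    have hle : oiTotalDomNum G ≤ ({x}ᶜ : Set V).ncard := Nat.sInf_le ⟨_, htot, hind, rfl⟩
    omega
  · push Not at h
    right
    choose p hxp hp using h
    have hinj : Function.Injective p := fun x y hxy =>
      hp y x (hxy ▸ (hxp x).symm)
    choose m hm using (Finite.injective_iff_surjective.1 hinj)
    refine ⟨m, fun v u => ⟨fun hvu => ?_, fun hu => ?_⟩⟩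
    · rw [← hm v] at hvu
      exact hp _ u hvu
    · rw [hu]
      simpa [hm v] using (hxp (m v)).symm

theorem oiTotalDomNum_lt_oitRomanDomNum (hiso : ∀ v, ∃ u, G.Adj v u)
    (hgt : oiRomanDomNum G < oitRomanDomNum G) : oiTotalDomNum G < oitRomanDomNum G := by
  obtain ⟨f, hf, hfsum⟩ := exists_isOITRDF_sum_eq_oitRomanDomNum hiso
  have hS : oiTotalDomNum G ≤ {v | 1 ≤ f v}.ncard :=
    Nat.sInf_le ⟨_, hf.isTotalDomSet, hf.1.isIndepSet_compl, rfl⟩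
  by_cases htwo : ∃ u, f u = 2
  · have := (Set.ncard_pos (Set.toFinite {v | f v = 2})).2 htwo
    have := hf.1.1.sum_eq
    omega
  have hone : ∀ v, f v = 1 := fun v =>
    by_contra fun hv => htwo (hf.1.1.exists_eq_two_of_ne_one hv)
  have hn : oitRomanDomNum G = Fintype.card V := by simp [← hfsum, hone]
  rcases oiTotalDomNum_lt_card_or_exists_adj_iff hiso with hlt | ⟨m, hm⟩
  · omega
  · have := card_le_oiRomanDomNum_of_adj_iff m hm
    omega

theorem stmt10_general {V : Type*} [Fintype V] (G : SimpleGraph V)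
    (hiso : ∀ v : V, ∃ u, G.Adj v u)
    (hgt : oiRomanDomNum G < oitRomanDomNum G) :
    max (oiTotalDomNum G) (oiRomanDomNum G) + 1 ≤ oitRomanDomNum G ∧
      oitRomanDomNum G ≤ min (oiTotalDomNum G) (oiRomanDomNum G) + domNum G := by
  have := oiTotalDomNum_lt_oitRomanDomNum hiso hgt
  have := oitRomanDomNum_le_oiTotalDomNum_add_domNum hiso
  have := oitRomanDomNum_le_oiRomanDomNum_add_domNum hiso
  omega

/-- For a graph of order `n ≥ 3` with no isolated vertex satisfying
`γ_oitR(G) > γ_oiR(G)`, one has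
`max{γ_{t,oi}(G), γ_oiR(G)} + 1 ≤ γ_oitR(G) ≤ min{γ_{t,oi}(G), γ_oiR(G)} + γ(G)`. -/
theorem stmt10 {V : Type*} [Fintype V] (G : SimpleGraph V)
    (hcard : 3 ≤ Fintype.card V) (hiso : ∀ v : V, ∃ u, G.Adj v u)
    (hgt : oiRomanDomNum G < oitRomanDomNum G) :
    max (oiTotalDomNum G) (oiRomanDomNum G) + 1 ≤ oitRomanDomNum G ∧
      oitRomanDomNum G ≤ min (oiTotalDomNum G) (oiRomanDomNum G) + domNum G :=
  stmt10_general G hiso hgt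

end OITRPaper
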